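/- Suppose R̃ ≤ 0 and I is partial, and let F = (S_safe × A) \ I. Then: (1) for every policy π, Ṽ*(d_0) ≥ J̃^π_+ := (1/(1−γ))·E_{(s,a)∼d̃^π}[r(s,a)·1{(s,a) ∈ F}], where Ṽ*(d_0) = max_π Ṽ^π(d_0) is the optimal value of M̃; (2) there exists an optimal policy π̃* of M̃ with E_{(s,a)∼d̃^{π̃*}}[1{(s,a) ∈ I}] = 0; and (3) if moreover R̃ < 0, then every optimal policy π̃* of M̃ satisfies E_{(s,a)∼d̃^{π̃*}}[1{(s,a) ∈ I}] = 0. -/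

import Mathlib

open scoped BigOperators Classical

noncomputable section

namespace SafeRL

variable {S A : Type*} [Fintype S] [Fintype A] [Nonempty A]

/-- `d` is a probability distribution on the finite type `S`. -/
def IsDist (d : S → ℝ) : Prop := (∀ s, 0 ≤ d s) ∧ ∑ s, d s = 1

/-- `P` is a transition kernel. -/
def IsKernel (P : S → A → S → ℝ) : Prop := ∀ s a, IsDist (P s a)

/-- `π` is a (Markov stationary stochastic) policy. -/
def IsPolicy (π : S → A → ℝ) : Prop := ∀ s, (∀ a, 0 ≤ π s a) ∧ ∑ a, π s a = 1

/-- Point mass at `s`. -/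
def pureDist (s : S) : S → ℝ := fun s' => if s' = s then 1 else 0

/-- One-step state-distribution update under policy `π`. -/
def step (P : S → A → S → ℝ) (π : S → A → ℝ) (d : S → ℝ) : S → ℝ :=
  fun s' => ∑ s, ∑ a, d s * π s a * P s a s'

/-- State distribution at time `t` when running `π` from `d0`. -/
def distAt (P : S → A → S → ℝ) (π : S → A → ℝ) (d0 : S → ℝ) (t : ℕ) : S → ℝ :=
  (step P π)^[t] d0

/-- Expected discounted return `V^π(d0)` of policy `π` from initial distribution `d0`. -/
def value (P : S → A → S → ℝ) (π : S → A → ℝ) (r : S → A → ℝ) (γ : ℝ) (d0 : S → ℝ) : ℝ :=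
  ∑' t : ℕ, γ ^ t * ∑ s, ∑ a, distAt P π d0 t s * π s a * r s a

/-- State value function `V^π(s)`. -/
def vf (P : S → A → S → ℝ) (π : S → A → ℝ) (r : S → A → ℝ) (γ : ℝ) (s : S) : ℝ :=
  value P π r γ (pureDist s)

/-- State-action value function `Q^π(s,a)`. -/
def qf (P : S → A → S → ℝ) (π : S → A → ℝ) (r : S → A → ℝ) (γ : ℝ) (s : S) (a : A) : ℝ :=
  r s a + γ * ∑ s', P s a s' * vf P π r γ s'

/-- The cost function `c(s,a) = 1{s = s_▷}` of the cost-based MDP. -/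
def cost (sbad : S) : S → A → ℝ := fun s _ => if s = sbad then 1 else 0

/-- Discounted state distribution `d^π(s)`. -/
def dsd (P : S → A → S → ℝ) (π : S → A → ℝ) (γ : ℝ) (d0 : S → ℝ) (s : S) : ℝ :=
  (1 - γ) * ∑' t : ℕ, γ ^ t * distAt P π d0 t s

/-- Discounted state-action distribution `d^π(s,a)`. -/
def dsa (P : S → A → S → ℝ) (π : S → A → ℝ) (γ : ℝ) (d0 : S → ℝ) (s : S) (a : A) : ℝ :=
  (1 - γ) * ∑' t : ℕ, γ ^ t * distAt P π d0 t s * π s a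

/-- Probability of the `h`-step trajectory prefix `f` when running `π` from `d`. -/
def prefProb (P : S → A → S → ℝ) (π : S → A → ℝ) :
    (S → ℝ) → (h : ℕ) → (Fin h → S × A) → ℝ
  | _, 0, _ => 1
  | d, h + 1, f =>
      d (f 0).1 * π (f 0).1 (f 0).2 *
        prefProb P π (P (f 0).1 (f 0).2) h (fun i => f i.succ)

/-- Probability that the `h`-step trajectory prefix generated by `π` from `d0` satisfies `E`. -/
def eventProb (P : S → A → S → ℝ) (π : S → A → ℝ) (d0 : S → ℝ) (h : ℕ)
    (E : (Fin h → S × A) → Prop) : ℝ :=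
  ∑ f : Fin h → S × A, if E f then prefProb P π d0 h f else 0

/-- `Q̄(s,μ) = E_{a ∼ μ(·|s)} Q̄(s,a)`. -/
def Qpol (Qb : S → A → ℝ) (μ : S → A → ℝ) (s : S) : ℝ := ∑ a, μ s a * Qb s a

/-- Advantage-like function `Ā(s,a) = Q̄(s,a) − Q̄(s,μ)`. -/
def Abar (Qb : S → A → ℝ) (μ : S → A → ℝ) (s : S) (a : A) : ℝ := Qb s a - Qpol Qb μ s

/-- The intervention set `I = {(s,a) ∈ S_safe × A : Ā(s,a) > η}`. -/
def intSet (Qb : S → A → ℝ) (μ : S → A → ℝ) (η : ℝ) (sbad sabs : S) : Set (S × A) :=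
  {p | p.1 ≠ sbad ∧ p.1 ≠ sabs ∧ η < Abar Qb μ p.1 p.2}

/-- The shielded policy `π' = G(π)`. -/
def shield (π μ : S → A → ℝ) (I : Set (S × A)) (sbad sabs : S) : S → A → ℝ :=
  fun s a =>
    if s = sbad ∨ s = sabs then π s a
    else (if (s, a) ∈ I then 0 else π s a)
      + μ s a * (1 - ∑ a', if (s, a') ∈ I then π s a' else 0)

/-- `σ`-admissibility of the intervention rule `(Q̄, μ, η)` (the condition does not
involve `η`): on safe states, `Q̄ ∈ [0,γ]` and
`c(s,a) + γ E_{s'∼P(·|s,a)}[Q̄(s',μ)] ≤ Q̄(s,a) + σ`. -/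
def SigmaAdmissible (P : S → A → S → ℝ) (Qb : S → A → ℝ) (μ : S → A → ℝ)
    (γ σ : ℝ) (sbad sabs : S) : Prop :=
  ∀ s, s ≠ sbad → s ≠ sabs → ∀ a : A,
    (0 ≤ Qb s a ∧ Qb s a ≤ γ) ∧
    cost sbad s a + γ * ∑ s', P s a s' * Qpol Qb μ s' ≤ Qb s a + σ

/-- Transition kernel of the absorbing MDP `M̃`; `none` plays the role of `s_†`. -/
def Ptil (P : S → A → S → ℝ) (I : Set (S × A)) : Option S → A → Option S → ℝ :=
  fun s? a s'? =>
    match s? with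
    | none => if s'? = none then 1 else 0
    | some s =>
        if (s, a) ∈ I then (if s'? = none then 1 else 0)
        else
          match s'? with
          | none => 0
          | some s' => P s a s'

/-- Reward of the absorbing MDP `M̃` with penalty `Rt` on the intervention set. -/
def rtil (r : S → A → ℝ) (I : Set (S × A)) (Rt : ℝ) : Option S → A → ℝ :=
  fun s? a =>
    match s? with
    | none => 0
    | some s => if (s, a) ∈ I then Rt else r s a

/-- Extension of a policy on `S` to `S ∪ {s_†}`, uniform at `s_†`. -/
def extPol (π : S → A → ℝ) : Option S → A → ℝ :=
  fun s? a =>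
    match s? with
    | none => (Fintype.card A : ℝ)⁻¹
    | some s => π s a

/-- Extension of an initial distribution on `S` to `S ∪ {s_†}`. -/
def extDist (d0 : S → ℝ) : Option S → ℝ :=
  fun s? => match s? with | none => 0 | some s => d0 s

/-- `P_G(π)`: discounted probability that a trajectory of `π` in `M` visits `I`. -/
def PG (P : S → A → S → ℝ) (π : S → A → ℝ) (d0 : S → ℝ) (γ : ℝ)
    (I : Set (S × A)) : ℝ :=
  (1 - γ) * ∑' h : ℕ, γ ^ h * eventProb P π d0 h (fun f => ∃ i, f i ∈ I)

/-- The deterministic policy associated to a map `g : S → A`. -/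
def detPol (g : S → A) : S → A → ℝ := fun s a => if a = g s then 1 else 0

/-- Bellman optimality operator `T̄` of the cost-based MDP. -/
def Tbar (P : S → A → S → ℝ) (sbad : S) (γ : ℝ) (Q : S → A → ℝ) : S → A → ℝ :=
  fun s a =>
    cost sbad s a +
      γ * ∑ s', P s a s' * Finset.univ.inf' Finset.univ_nonempty (fun a' => Q s' a')

/-!
With penalty `R̃` the return of a policy is its zero-penalty return plus `R̃ / (1 - γ)` times
the discounted mass it puts on `I`, so a nonpositive penalty can only lower returns. With zero
penalty, an action in `I` leads to `s_†` and earns nothing afterwards, while every other action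
has nonnegative value; since `I` is partial, a greedy policy for the Bellman optimality fixed
point can therefore be chosen outside `I`. It is optimal with zero penalty and never pays the
penalty, hence is optimal for `M̃` as well, and comparing with it gives all three claims.
-/

section Evaluation

variable {S A : Type*} [Fintype S] [Fintype A]
  {P : S → A → S → ℝ} {π : S → A → ℝ} {r : S → A → ℝ} {γ : ℝ} {d : S → ℝ}

theorem IsDist.le_one (hd : IsDist d) (s : S) : d s ≤ 1 := by
  simpa [hd.2] using Finset.single_le_sum (fun u _ => hd.1 u) (Finset.mem_univ s)

theorem isDist_pureDist (s : S) : IsDist (pureDist s) :=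
  ⟨fun u => by unfold pureDist; split_ifs <;> norm_num, by simp [pureDist]⟩

theorem sum_smul_pureDist (d : S → ℝ) : ∑ u, d u • pureDist u = d := by
  ext s; simp [pureDist]

theorem step_pureDist (s s' : S) : step P π (pureDist s) s' = ∑ a, π s a * P s a s' := by
  simp [step, pureDist]

theorem isDist_step (hP : IsKernel P) (hπ : IsPolicy π) (hd : IsDist d) :
    IsDist (step P π d) := by
  refine ⟨fun s' => Finset.sum_nonneg fun s _ => Finset.sum_nonneg fun a _ =>
    mul_nonneg (mul_nonneg (hd.1 s) ((hπ s).1 a)) ((hP s a).1 s'), ?_⟩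
  calc ∑ s', step P π d s' = ∑ s, ∑ a, d s * π s a * ∑ s', P s a s' := by
        simp only [step, Finset.mul_sum]
        rw [Finset.sum_comm]
        exact Finset.sum_congr rfl fun s _ => Finset.sum_comm
    _ = 1 := by simp [(hP _ _).2, ← Finset.mul_sum, (hπ _).2, hd.2]

theorem isDist_distAt (hP : IsKernel P) (hπ : IsPolicy π) (hd : IsDist d) (t : ℕ) :
    IsDist (distAt P π d t) := by
  induction t with
  | zero => exact hd
  | succ t ih =>
    rw [distAt, Function.iterate_succ_apply']
    exact isDist_step hP hπ ih

def stepLinearMap (P : S → A → S → ℝ) (π : S → A → ℝ) : (S → ℝ) →ₗ[ℝ] (S → ℝ) where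
  toFun := step P π
  map_add' d e := by ext; simp [step, add_mul, Finset.sum_add_distrib]
  map_smul' c d := by ext; simp [step, Finset.mul_sum, mul_assoc]

theorem distAt_eq_sum (d : S → ℝ) (t : ℕ) :
    distAt P π d t = ∑ u, d u • distAt P π (pureDist u) t := by
  have hpow : ∀ e, distAt P π e t = (stepLinearMap P π ^ t) e :=
    fun e => (Module.End.pow_apply (stepLinearMap P π) t e).symm
  simp only [hpow]
  conv_lhs => rw [← sum_smul_pureDist d]
  simp only [map_sum, map_smul]

theorem summable_discounted_distAt (hP : IsKernel P) (hπ : IsPolicy π) (hd : IsDist d)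
    (hγ0 : 0 ≤ γ) (hγ1 : γ < 1) (s : S) :
    Summable fun t => γ ^ t * distAt P π d t s :=
  (summable_geometric_of_lt_one hγ0 hγ1).of_nonneg_of_le
    (fun t => mul_nonneg (pow_nonneg hγ0 t) ((isDist_distAt hP hπ hd t).1 s))
    (fun t => mul_le_of_le_one_right (pow_nonneg hγ0 t) ((isDist_distAt hP hπ hd t).le_one s))

theorem dsd_eq_add (hP : IsKernel P) (hπ : IsPolicy π) (hd : IsDist d)
    (hγ0 : 0 ≤ γ) (hγ1 : γ < 1) (s : S) :
    dsd P π γ d s = (1 - γ) * d s + γ * dsd P π γ (step P π d) s := by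
  have hshift : ∀ t, distAt P π d (t + 1) = distAt P π (step P π d) t := fun t => by
    rw [distAt, distAt, Function.iterate_succ_apply]
  rw [dsd, dsd, (summable_discounted_distAt hP hπ hd hγ0 hγ1 s).tsum_eq_zero_add]
  simp only [hshift, pow_succ', mul_assoc, tsum_mul_left]
  simp [distAt]
  ring

theorem dsd_eq_sum (hP : IsKernel P) (hπ : IsPolicy π) (hγ0 : 0 ≤ γ) (hγ1 : γ < 1)
    (d : S → ℝ) (s : S) :
    dsd P π γ d s = ∑ u, d u * dsd P π γ (pureDist u) s := by
  have hterm : ∀ t, γ ^ t * distAt P π d t s =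
      ∑ u, d u * (γ ^ t * distAt P π (pureDist u) t s) := fun t => by
    rw [distAt_eq_sum d]
    simp only [Finset.sum_apply, Pi.smul_apply, smul_eq_mul, Finset.mul_sum]
    exact Finset.sum_congr rfl fun u _ => by ring
  rw [dsd, tsum_congr hterm, Summable.tsum_finsetSum fun u _ =>
    (summable_discounted_distAt hP hπ (isDist_pureDist u) hγ0 hγ1 s).mul_left (d u),
    Finset.mul_sum]
  refine Finset.sum_congr rfl fun u _ => ?_
  rw [dsd, tsum_mul_left]
  ring

theorem value_eq_sum_dsd (hP : IsKernel P) (hπ : IsPolicy π) (hd : IsDist d)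
    (hγ0 : 0 ≤ γ) (hγ1 : γ < 1) :
    value P π r γ d = (1 - γ)⁻¹ * ∑ s, dsd P π γ d s * ∑ a, π s a * r s a := by
  have hγ : 1 - γ ≠ 0 := by linarith
  have hsum := summable_discounted_distAt hP hπ hd hγ0 hγ1
  have hterm : ∀ t, γ ^ t * ∑ s, ∑ a, distAt P π d t s * π s a * r s a =
      ∑ s, γ ^ t * distAt P π d t s * ∑ a, π s a * r s a := fun t => by
    simp only [Finset.mul_sum]; congr 1; ext s; congr 1; ext a; ring
  rw [value, tsum_congr hterm,
    Summable.tsum_finsetSum fun s _ => (hsum s).mul_right _, Finset.mul_sum]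
  refine Finset.sum_congr rfl fun s _ => ?_
  rw [dsd, tsum_mul_right]
  field_simp

theorem value_eq_sum_vf (hP : IsKernel P) (hπ : IsPolicy π) (hd : IsDist d)
    (hγ0 : 0 ≤ γ) (hγ1 : γ < 1) :
    value P π r γ d = ∑ u, d u * vf P π r γ u := by
  simp only [vf, value_eq_sum_dsd hP hπ hd hγ0 hγ1,
    value_eq_sum_dsd hP hπ (isDist_pureDist _) hγ0 hγ1, dsd_eq_sum hP hπ hγ0 hγ1 d]
  simp only [Finset.sum_mul]
  rw [Finset.sum_comm, Finset.mul_sum]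
  refine Finset.sum_congr rfl fun u _ => ?_
  simp only [Finset.mul_sum, mul_left_comm (1 - γ)⁻¹, mul_assoc]

theorem value_eq_add_value_step (hP : IsKernel P) (hπ : IsPolicy π) (hd : IsDist d)
    (hγ0 : 0 ≤ γ) (hγ1 : γ < 1) :
    value P π r γ d =
      ∑ s, d s * ∑ a, π s a * r s a + γ * value P π r γ (step P π d) := by
  have hγ : 1 - γ ≠ 0 := by linarith
  rw [value_eq_sum_dsd hP hπ hd hγ0 hγ1,
    value_eq_sum_dsd hP hπ (isDist_step hP hπ hd) hγ0 hγ1]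
  simp only [dsd_eq_add hP hπ hd hγ0 hγ1, add_mul, Finset.sum_add_distrib, mul_add,
    Finset.mul_sum]
  congr 1 <;> refine Finset.sum_congr rfl fun s _ => ?_ <;> field_simp

theorem dsa_eq_dsd_mul (s : S) (a : A) : dsa P π γ d s a = dsd P π γ d s * π s a := by
  rw [dsa, dsd, mul_assoc, tsum_mul_right]

theorem dsa_nonneg (hP : IsKernel P) (hπ : IsPolicy π) (hd : IsDist d)
    (hγ0 : 0 ≤ γ) (hγ1 : γ < 1) (s : S) (a : A) : 0 ≤ dsa P π γ d s a :=
  mul_nonneg (sub_nonneg.2 hγ1.le) (tsum_nonneg fun t =>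
    mul_nonneg (mul_nonneg (pow_nonneg hγ0 t) ((isDist_distAt hP hπ hd t).1 s)) ((hπ s).1 a))

theorem value_eq_sum_dsa (hP : IsKernel P) (hπ : IsPolicy π) (hd : IsDist d)
    (hγ0 : 0 ≤ γ) (hγ1 : γ < 1) :
    value P π r γ d = (1 - γ)⁻¹ * ∑ s, ∑ a, dsa P π γ d s a * r s a := by
  simp only [value_eq_sum_dsd hP hπ hd hγ0 hγ1, dsa_eq_dsd_mul, Finset.mul_sum, mul_assoc]

end Evaluation

theorem _root_.ContractingWith.fixedPoint_le_of_map_le {α : Type*} [MetricSpace α]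
    [Nonempty α] [CompleteSpace α] [Preorder α] [ClosedIicTopology α] {K : NNReal}
    {f : α → α} (hf : ContractingWith K f) (hmono : Monotone f) {x : α} (hx : f x ≤ x) :
    ContractingWith.fixedPoint f hf ≤ x :=
  le_of_tendsto' (hf.tendsto_iterate_fixedPoint x) fun n =>
    hmono.antitone_iterate_of_map_le hx (Nat.zero_le n)

theorem _root_.ContractingWith.le_fixedPoint_of_le_map {α : Type*} [MetricSpace α]
    [Nonempty α] [CompleteSpace α] [Preorder α] [ClosedIciTopology α] {K : NNReal}
    {f : α → α} (hf : ContractingWith K f) (hmono : Monotone f) {x : α} (hx : x ≤ f x) :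
    x ≤ ContractingWith.fixedPoint f hf :=
  ge_of_tendsto' (hf.tendsto_iterate_fixedPoint x) fun n =>
    hmono.monotone_iterate_of_le_map hx (Nat.zero_le n)

theorem abs_sup'_sub_sup'_le {ι : Type*} {t : Finset ι} (ht : t.Nonempty) {f g : ι → ℝ} {c : ℝ}
    (h : ∀ i ∈ t, |f i - g i| ≤ c) : |t.sup' ht f - t.sup' ht g| ≤ c := by
  rw [abs_sub_le_iff, sub_le_iff_le_add, sub_le_iff_le_add]
  constructor <;> refine Finset.sup'_le _ _ fun i hi => ?_
  · linarith [(abs_le.1 (h i hi)).2, Finset.le_sup' g hi]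
  · linarith [(abs_le.1 (h i hi)).1, Finset.le_sup' f hi]

section Bellman

variable {S A : Type*} [Fintype S]
  {P : S → A → S → ℝ} {π : S → A → ℝ} {r : S → A → ℝ} {γ : ℝ} {V : S → ℝ}

def qOf (P : S → A → S → ℝ) (r : S → A → ℝ) (γ : ℝ) (V : S → ℝ) (s : S) (a : A) : ℝ :=
  r s a + γ * ∑ s', P s a s' * V s'

theorem abs_qOf_sub_le (hP : IsKernel P) (hγ0 : 0 ≤ γ) (U W : S → ℝ) (s : S) (a : A) :
    |qOf P r γ U s a - qOf P r γ W s a| ≤ γ * dist U W := by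
  have hdiff : qOf P r γ U s a - qOf P r γ W s a = γ * ∑ s', P s a s' * (U s' - W s') := by
    simp only [qOf, mul_sub, Finset.sum_sub_distrib]; ring
  rw [hdiff, abs_mul, abs_of_nonneg hγ0]
  refine mul_le_mul_of_nonneg_left ?_ hγ0
  calc |∑ s', P s a s' * (U s' - W s')| ≤ ∑ s', P s a s' * dist U W := by
        refine (Finset.abs_sum_le_sum_abs _ _).trans (Finset.sum_le_sum fun s' _ => ?_)
        rw [abs_mul, abs_of_nonneg ((hP s a).1 s'), ← Real.dist_eq]
        exact mul_le_mul_of_nonneg_left (dist_le_pi_dist U W s') ((hP s a).1 s')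
    _ = dist U W := by rw [← Finset.sum_mul, (hP s a).2, one_mul]

theorem qOf_mono (hP : IsKernel P) (hγ0 : 0 ≤ γ) {U W : S → ℝ} (h : U ≤ W) (s : S) (a : A) :
    qOf P r γ U s a ≤ qOf P r γ W s a :=
  add_le_add_right (mul_le_mul_of_nonneg_left (Finset.sum_le_sum fun s' _ =>
    mul_le_mul_of_nonneg_left (h s') ((hP s a).1 s')) hγ0) _

variable [Fintype A]

def policyBellman (P : S → A → S → ℝ) (π r : S → A → ℝ) (γ : ℝ) (V : S → ℝ) : S → ℝ :=
  fun s => ∑ a, π s a * qOf P r γ V s a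

theorem policyBellman_vf (hP : IsKernel P) (hπ : IsPolicy π) (hγ0 : 0 ≤ γ) (hγ1 : γ < 1) :
    policyBellman P π r γ (vf P π r γ) = vf P π r γ := by
  ext s
  conv_rhs => rw [vf, value_eq_add_value_step hP hπ (isDist_pureDist s) hγ0 hγ1,
    value_eq_sum_vf hP hπ (isDist_step hP hπ (isDist_pureDist s)) hγ0 hγ1]
  simp only [policyBellman, qOf, step_pureDist, mul_add, Finset.sum_add_distrib,
    Finset.mul_sum, Finset.sum_mul]
  congr 1
  · simp [pureDist]
  · rw [Finset.sum_comm]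
    exact Finset.sum_congr rfl fun a _ => Finset.sum_congr rfl fun u _ => by ring

theorem contractingWith_policyBellman (hP : IsKernel P) (hπ : IsPolicy π) (hγ0 : 0 ≤ γ)
    (hγ1 : γ < 1) : ContractingWith ⟨γ, hγ0⟩ (policyBellman P π r γ) := by
  refine ⟨hγ1, LipschitzWith.of_dist_le_mul fun U W => ?_⟩
  refine (dist_pi_le_iff (mul_nonneg hγ0 dist_nonneg)).2 fun s => ?_
  rw [Real.dist_eq, policyBellman, policyBellman, ← Finset.sum_sub_distrib]
  calc |∑ a, (π s a * qOf P r γ U s a - π s a * qOf P r γ W s a)|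
      ≤ ∑ a, π s a * (γ * dist U W) := by
        refine (Finset.abs_sum_le_sum_abs _ _).trans (Finset.sum_le_sum fun a _ => ?_)
        rw [← mul_sub, abs_mul, abs_of_nonneg ((hπ s).1 a)]
        exact mul_le_mul_of_nonneg_left (abs_qOf_sub_le hP hγ0 U W s a) ((hπ s).1 a)
    _ = γ * dist U W := by rw [← Finset.sum_mul, (hπ s).2, one_mul]

theorem monotone_policyBellman (hP : IsKernel P) (hπ : IsPolicy π) (hγ0 : 0 ≤ γ) :
    Monotone (policyBellman P π r γ) := fun _ _ h s =>
  Finset.sum_le_sum fun a _ => mul_le_mul_of_nonneg_left (qOf_mono hP hγ0 h s a) ((hπ s).1 a)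

theorem vf_eq_of_policyBellman_eq (hP : IsKernel P) (hπ : IsPolicy π) (hγ0 : 0 ≤ γ)
    (hγ1 : γ < 1) (hV : policyBellman P π r γ V = V) : vf P π r γ = V :=
  (contractingWith_policyBellman hP hπ hγ0 hγ1).fixedPoint_unique'
    (policyBellman_vf hP hπ hγ0 hγ1) hV

variable [Nonempty A]

def optBellman (P : S → A → S → ℝ) (r : S → A → ℝ) (γ : ℝ) (V : S → ℝ) : S → ℝ :=
  fun s => Finset.univ.sup' Finset.univ_nonempty (qOf P r γ V s)

theorem contractingWith_optBellman (hP : IsKernel P) (hγ0 : 0 ≤ γ) (hγ1 : γ < 1) :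
    ContractingWith ⟨γ, hγ0⟩ (optBellman P r γ) := by
  refine ⟨hγ1, LipschitzWith.of_dist_le_mul fun U W => ?_⟩
  refine (dist_pi_le_iff (mul_nonneg hγ0 dist_nonneg)).2 fun s => ?_
  rw [Real.dist_eq]
  exact abs_sup'_sub_sup'_le _ fun a _ => abs_qOf_sub_le hP hγ0 U W s a

theorem monotone_optBellman (hP : IsKernel P) (hγ0 : 0 ≤ γ) :
    Monotone (optBellman P r γ) := fun _ _ h s =>
  Finset.sup'_mono_fun fun a _ => qOf_mono hP hγ0 h s a

theorem policyBellman_le_optBellman (hπ : IsPolicy π) (V : S → ℝ) :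
    policyBellman P π r γ V ≤ optBellman P r γ V := fun s =>
  calc ∑ a, π s a * qOf P r γ V s a ≤ ∑ a, π s a * optBellman P r γ V s :=
        Finset.sum_le_sum fun a _ => mul_le_mul_of_nonneg_left
          (Finset.le_sup' (qOf P r γ V s) (Finset.mem_univ a)) ((hπ s).1 a)
    _ = optBellman P r γ V s := by rw [← Finset.sum_mul, (hπ s).2, one_mul]

theorem exists_optBellman_eq (hP : IsKernel P) (hγ0 : 0 ≤ γ) (hγ1 : γ < 1) :
    ∃ V, optBellman P r γ V = V :=
  ⟨_, (contractingWith_optBellman hP hγ0 hγ1).fixedPoint_isFixedPt⟩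

theorem vf_le_of_optBellman_eq (hP : IsKernel P) (hπ : IsPolicy π) (hγ0 : 0 ≤ γ)
    (hγ1 : γ < 1) (hV : optBellman P r γ V = V) : vf P π r γ ≤ V := by
  have hf := contractingWith_policyBellman (r := r) hP hπ hγ0 hγ1
  rw [hf.fixedPoint_unique (policyBellman_vf hP hπ hγ0 hγ1)]
  exact hf.fixedPoint_le_of_map_le (monotone_policyBellman hP hπ hγ0)
    ((policyBellman_le_optBellman hπ V).trans hV.le)

theorem nonneg_of_optBellman_eq (hP : IsKernel P) (hγ0 : 0 ≤ γ) (hγ1 : γ < 1)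
    (hr : ∀ s a, 0 ≤ r s a) (hV : optBellman P r γ V = V) : 0 ≤ V := by
  have hf := contractingWith_optBellman (r := r) hP hγ0 hγ1
  rw [hf.fixedPoint_unique hV]
  refine hf.le_fixedPoint_of_le_map (monotone_optBellman hP hγ0) fun s => ?_
  obtain ⟨a⟩ := ‹Nonempty A›
  refine le_trans ?_ (Finset.le_sup' _ (Finset.mem_univ a))
  simpa [qOf] using hr s a

theorem value_le_value_of_greedy {πo : S → A → ℝ} {d : S → ℝ} (hP : IsKernel P)
    (hπ : IsPolicy π) (hπo : IsPolicy πo) (hd : IsDist d) (hγ0 : 0 ≤ γ) (hγ1 : γ < 1)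
    (hV : optBellman P r γ V = V) (hgreedy : policyBellman P πo r γ V = V) :
    value P π r γ d ≤ value P πo r γ d := by
  rw [value_eq_sum_vf hP hπ hd hγ0 hγ1, value_eq_sum_vf hP hπo hd hγ0 hγ1,
    vf_eq_of_policyBellman_eq hP hπo hγ0 hγ1 hgreedy]
  exact Finset.sum_le_sum fun s _ =>
    mul_le_mul_of_nonneg_left (vf_le_of_optBellman_eq hP hπ hγ0 hγ1 hV s) (hd.1 s)

end Bellman

theorem exists_greedy_not_mem {S A : Type*} [Fintype A] [Nonempty A] {I : Set (S × A)}
    (hpartial : ∀ p ∈ I, ∃ a' : A, (p.1, a') ∉ I) (Q : S → A → ℝ)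
    (hQ : ∀ s a a', (s, a) ∈ I → Q s a ≤ Q s a') :
    ∃ g : S → A, (∀ s, (s, g s) ∉ I) ∧ ∀ s a, Q s a ≤ Q s (g s) := by
  have hfree : ∀ s, ∃ a, (s, a) ∉ I := fun s => by
    obtain ⟨a⟩ := ‹Nonempty A›
    by_cases ha : (s, a) ∈ I
    exacts [hpartial _ ha, ⟨a, ha⟩]
  choose g hgI hgmax using fun s => (Finset.univ.filter fun a => (s, a) ∉ I).exists_max_image
    (Q s) (by simpa [Finset.filter_nonempty_iff] using hfree s)
  refine ⟨g, fun s => (Finset.mem_filter.1 (hgI s)).2, fun s a => ?_⟩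
  by_cases ha : (s, a) ∈ I
  exacts [hQ s a (g s) ha, hgmax s a (by simpa using ha)]

theorem isPolicy_detPol {S A : Type*} [Fintype A] (g : S → A) : IsPolicy (detPol g) :=
  fun s => ⟨fun a => by unfold detPol; split_ifs <;> norm_num, by simp [detPol]⟩

theorem isPolicy_extPol {S A : Type*} [Fintype A] [Nonempty A] {π : S → A → ℝ}
    (hπ : IsPolicy π) : IsPolicy (extPol π) := by
  rintro (_ | s)
  · exact ⟨fun a => by simp [extPol], by simp [extPol]⟩
  · exact hπ s

section Absorbing

variable {S A : Type*} [Fintype S]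
  {P : S → A → S → ℝ} {I : Set (S × A)} {π : S → A → ℝ} {r : S → A → ℝ} {γ : ℝ}
  {d0 : S → ℝ} {Rt : ℝ}

theorem isKernel_Ptil (hP : IsKernel P) : IsKernel (Ptil P I) := by
  rintro (_ | s) a
  · exact ⟨fun s' => by simp only [Ptil]; split_ifs <;> norm_num, by simp [Ptil]⟩
  by_cases ha : (s, a) ∈ I
  · exact ⟨fun s' => by simp only [Ptil, ha]; split_ifs <;> norm_num, by simp [Ptil, ha]⟩
  · refine ⟨fun s' => ?_, ?_⟩
    · cases s' <;> simp [Ptil, ha, (hP s a).1]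
    · simp [Ptil, ha, Fintype.sum_option, (hP s a).2]

theorem isDist_extDist (hd0 : IsDist d0) : IsDist (extDist d0) :=
  ⟨fun s => by cases s; exacts [le_rfl, hd0.1 _], by simp [extDist, Fintype.sum_option, hd0.2]⟩

theorem qOf_Ptil_none (V : Option S → ℝ) (a : A) :
    qOf (Ptil P I) (rtil r I Rt) γ V none a = γ * V none := by
  simp [qOf, Ptil, rtil]

theorem qOf_Ptil_some_of_mem (V : Option S → ℝ) {s : S} {a : A} (h : (s, a) ∈ I) :
    qOf (Ptil P I) (rtil r I Rt) γ V (some s) a = Rt + γ * V none := by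
  simp [qOf, Ptil, rtil, h]

variable [Fintype A]

def interventionMass (P : S → A → S → ℝ) (I : Set (S × A)) (π : S → A → ℝ) (γ : ℝ)
    (d0 : S → ℝ) : ℝ :=
  ∑ s, ∑ a, if (s, a) ∈ I then dsa (Ptil P I) (extPol π) γ (extDist d0) (some s) a else 0

theorem interventionMass_detPol {g : S → A} (hg : ∀ s, (s, g s) ∉ I) :
    interventionMass P I (detPol g) γ d0 = 0 :=
  Finset.sum_eq_zero fun s _ => Finset.sum_eq_zero fun a _ => by
    split_ifs with ha
    · have hne : a ≠ g s := fun h => hg s (h ▸ ha)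
      simp [dsa_eq_dsd_mul, extPol, detPol, hne]
    · rfl

variable [Nonempty A]

theorem interventionMass_nonneg (hP : IsKernel P) (hπ : IsPolicy π) (hd0 : IsDist d0)
    (hγ0 : 0 ≤ γ) (hγ1 : γ < 1) : 0 ≤ interventionMass P I π γ d0 :=
  Finset.sum_nonneg fun s _ => Finset.sum_nonneg fun a _ => by
    split_ifs
    exacts [dsa_nonneg (isKernel_Ptil hP) (isPolicy_extPol hπ) (isDist_extDist hd0) hγ0 hγ1 _ _,
      le_rfl]

theorem value_rtil (hP : IsKernel P) (hπ : IsPolicy π) (hd0 : IsDist d0)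
    (hγ0 : 0 ≤ γ) (hγ1 : γ < 1) :
    value (Ptil P I) (extPol π) (rtil r I Rt) γ (extDist d0) =
      value (Ptil P I) (extPol π) (rtil r I 0) γ (extDist d0) +
        (1 - γ)⁻¹ * (Rt * interventionMass P I π γ d0) := by
  have hP' := isKernel_Ptil (I := I) hP
  rw [value_eq_sum_dsa hP' (isPolicy_extPol hπ) (isDist_extDist hd0) hγ0 hγ1,
    value_eq_sum_dsa hP' (isPolicy_extPol hπ) (isDist_extDist hd0) hγ0 hγ1, ← mul_add]
  congr 1
  simp only [Fintype.sum_option, interventionMass, rtil, mul_zero, Finset.sum_const_zero,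
    zero_add, Finset.mul_sum, ← Finset.sum_add_distrib]
  refine Finset.sum_congr rfl fun s _ => Finset.sum_congr rfl fun a _ => ?_
  split_ifs <;> ring

theorem value_rtil_le (hRt : Rt ≤ 0) (hP : IsKernel P) (hπ : IsPolicy π) (hd0 : IsDist d0)
    (hγ0 : 0 ≤ γ) (hγ1 : γ < 1) :
    value (Ptil P I) (extPol π) (rtil r I Rt) γ (extDist d0) ≤
      value (Ptil P I) (extPol π) (rtil r I 0) γ (extDist d0) := by
  rw [value_rtil hP hπ hd0 hγ0 hγ1, add_le_iff_nonpos_right]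
  exact mul_nonpos_of_nonneg_of_nonpos (inv_nonneg.2 (sub_nonneg.2 hγ1.le))
    (mul_nonpos_of_nonpos_of_nonneg hRt (interventionMass_nonneg hP hπ hd0 hγ0 hγ1))

theorem value_rtil_zero {sbad sabs : S} (hrbad : ∀ a, r sbad a = 0)
    (hrabs : ∀ a, r sabs a = 0) (hP : IsKernel P) (hπ : IsPolicy π) (hd0 : IsDist d0)
    (hγ0 : 0 ≤ γ) (hγ1 : γ < 1) :
    value (Ptil P I) (extPol π) (rtil r I 0) γ (extDist d0) =
      (1 - γ)⁻¹ * ∑ s, ∑ a, dsa (Ptil P I) (extPol π) γ (extDist d0) (some s) a *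
        (if s ≠ sbad ∧ s ≠ sabs ∧ (s, a) ∉ I then r s a else 0) := by
  rw [value_eq_sum_dsa (isKernel_Ptil hP) (isPolicy_extPol hπ) (isDist_extDist hd0) hγ0 hγ1,
    Fintype.sum_option]
  simp only [rtil, mul_zero, Finset.sum_const_zero, zero_add]
  refine congrArg _ (Finset.sum_congr rfl fun s _ => Finset.sum_congr rfl fun a _ => ?_)
  by_cases hs : s = sbad
  · subst hs; simp [hrbad]
  by_cases hs' : s = sabs
  · subst hs'; simp [hrabs]
  simp [hs, hs']

theorem apply_none_eq_zero_of_optBellman_eq (hγ1 : γ < 1) {V : Option S → ℝ}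
    (hV : optBellman (Ptil P I) (rtil r I 0) γ V = V) : V none = 0 := by
  have h := congrFun hV none
  simp only [optBellman, qOf_Ptil_none, Finset.sup'_const] at h
  nlinarith

theorem exists_optimal_policy_interventionMass_eq_zero (hP : IsKernel P) (hd0 : IsDist d0)
    (hγ0 : 0 ≤ γ) (hγ1 : γ < 1) (hr : ∀ s a, 0 ≤ r s a)
    (hpartial : ∀ p ∈ I, ∃ a' : A, (p.1, a') ∉ I) :
    ∃ πo, IsPolicy πo ∧
      (∀ π, IsPolicy π → value (Ptil P I) (extPol π) (rtil r I 0) γ (extDist d0) ≤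
        value (Ptil P I) (extPol πo) (rtil r I 0) γ (extDist d0)) ∧
      interventionMass P I πo γ d0 = 0 := by
  have hP' := isKernel_Ptil (I := I) hP
  have hr' : ∀ s a, 0 ≤ rtil r I 0 s a := by
    rintro (_ | s) a
    · exact le_rfl
    · simp only [rtil]; split_ifs; exacts [le_rfl, hr s a]
  obtain ⟨V, hV⟩ := exists_optBellman_eq (r := rtil r I 0) hP' hγ0 hγ1
  have hnone := apply_none_eq_zero_of_optBellman_eq hγ1 hV
  have hQ : ∀ s a, 0 ≤ qOf (Ptil P I) (rtil r I 0) γ V s a := fun s a =>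
    (by simpa [qOf] using hr' s a : 0 ≤ qOf (Ptil P I) (rtil r I 0) γ 0 s a).trans
      (qOf_mono hP' hγ0 (nonneg_of_optBellman_eq hP' hγ0 hγ1 hr' hV) s a)
  -- an action in `I` is worth `γ * V none = 0`, no more than any other action
  obtain ⟨g, hgI, hgmax⟩ := exists_greedy_not_mem hpartial
    (fun s a => qOf (Ptil P I) (rtil r I 0) γ V (some s) a) fun s a a' ha => by
      simpa [qOf_Ptil_some_of_mem V ha, hnone] using hQ (some s) a'
  have hgreedy : policyBellman (Ptil P I) (extPol (detPol g)) (rtil r I 0) γ V = V := by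
    ext (_ | s)
    · simp [policyBellman, qOf_Ptil_none, hnone]
    · conv_rhs => rw [← hV]
      simp only [policyBellman, extPol, detPol, ite_mul, one_mul, zero_mul,
        Finset.sum_ite_eq', Finset.mem_univ, if_true]
      exact le_antisymm (Finset.le_sup' _ (Finset.mem_univ _))
        (Finset.sup'_le _ _ fun a _ => hgmax s a)
  refine ⟨detPol g, isPolicy_detPol g, fun π hπ => ?_, interventionMass_detPol hgI⟩
  exact value_le_value_of_greedy hP' (isPolicy_extPol hπ) (isPolicy_extPol (isPolicy_detPol g))
    (isDist_extDist hd0) hγ0 hγ1 hV hgreedy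

end Absorbing

theorem stmt_15_general
    (P : S → A → S → ℝ) (r : S → A → ℝ) (γ : ℝ) (sbad sabs : S) (d0 : S → ℝ)
    (I : Set (S × A)) (Rt : ℝ)
    (hP : IsKernel P) (hγ0 : 0 ≤ γ) (hγ1 : γ < 1)
    (hr : ∀ s a, 0 ≤ r s a ∧ r s a ≤ 1)
    (hrbad : ∀ a : A, r sbad a = 0) (hrabs : ∀ a : A, r sabs a = 0)
    (hd0 : IsDist d0)
    (hpartial : ∀ p ∈ I, ∃ a' : A, (p.1, a') ∉ I)
    (hRt : Rt ≤ 0) :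
    (∀ π, IsPolicy π →
        (1 / (1 - γ)) * (∑ s, ∑ a,
            dsa (Ptil P I) (extPol π) γ (extDist d0) (some s) a *
              (if s ≠ sbad ∧ s ≠ sabs ∧ (s, a) ∉ I then r s a else 0))
          ≤ ⨆ p : {π' : S → A → ℝ // IsPolicy π'},
              value (Ptil P I) (extPol p.1) (rtil r I Rt) γ (extDist d0))
    ∧ (∃ πo, IsPolicy πo ∧
        (∀ π', IsPolicy π' →
          value (Ptil P I) (extPol π') (rtil r I Rt) γ (extDist d0)
            ≤ value (Ptil P I) (extPol πo) (rtil r I Rt) γ (extDist d0)) ∧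
        (∑ s, ∑ a,
          if (s, a) ∈ I then dsa (Ptil P I) (extPol πo) γ (extDist d0) (some s) a
          else 0) = 0)
    ∧ (Rt < 0 → ∀ πo, IsPolicy πo →
        (∀ π', IsPolicy π' →
          value (Ptil P I) (extPol π') (rtil r I Rt) γ (extDist d0)
            ≤ value (Ptil P I) (extPol πo) (rtil r I Rt) γ (extDist d0)) →
        (∑ s, ∑ a,
          if (s, a) ∈ I then dsa (Ptil P I) (extPol πo) γ (extDist d0) (some s) a
          else 0) = 0) := by
  obtain ⟨πo, hπo, hopt, hmass⟩ := exists_optimal_policy_interventionMass_eq_zero hP hd0 hγ0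
    hγ1 (fun s a => (hr s a).1) hpartial
  have hsplit := fun π (hπ : IsPolicy π) =>
    value_rtil (I := I) (Rt := Rt) (r := r) hP hπ hd0 hγ0 hγ1
  have hvalo : value (Ptil P I) (extPol πo) (rtil r I Rt) γ (extDist d0) =
      value (Ptil P I) (extPol πo) (rtil r I 0) γ (extDist d0) := by
    rw [hsplit πo hπo, hmass, mul_zero, mul_zero, add_zero]
  have hoptR : ∀ π, IsPolicy π →
      value (Ptil P I) (extPol π) (rtil r I Rt) γ (extDist d0) ≤
        value (Ptil P I) (extPol πo) (rtil r I Rt) γ (extDist d0) := fun π hπ =>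
    (value_rtil_le hRt hP hπ hd0 hγ0 hγ1).trans ((hopt π hπ).trans hvalo.ge)
  refine ⟨fun π hπ => ?_, ⟨πo, hπo, hoptR, hmass⟩, fun hRt' π hπ hoptπ => ?_⟩
  · have hbdd : BddAbove (Set.range fun p : {π' : S → A → ℝ // IsPolicy π'} =>
        value (Ptil P I) (extPol p.1) (rtil r I Rt) γ (extDist d0)) :=
      ⟨_, Set.forall_mem_range.2 fun p => hoptR p.1 p.2⟩
    rw [one_div, ← value_rtil_zero hrbad hrabs hP hπ hd0 hγ0 hγ1]
    exact (hopt π hπ).trans (hvalo.ge.trans (le_ciSup hbdd ⟨πo, hπo⟩))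
  · have h := hoptπ πo hπo
    rw [hvalo, hsplit π hπ] at h
    have hRtm : 0 ≤ Rt * interventionMass P I π γ d0 :=
      (mul_nonneg_iff_of_pos_left (inv_pos.2 (sub_pos.2 hγ1))).1 (by linarith [hopt π hπ])
    exact le_antisymm (nonpos_of_mul_nonneg_right hRtm hRt')
      (interventionMass_nonneg hP hπ hd0 hγ0 hγ1)

/-- (1) `Ṽ*(d₀) ≥ J̃^π_+` for every policy `π`; (2) some optimal policy of `M̃`
never visits `I`; (3) if `R̃ < 0`, every optimal policy of `M̃` never visits `I`. -/
theorem stmt_15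
    (P : S → A → S → ℝ) (r : S → A → ℝ) (γ : ℝ) (sbad sabs : S) (d0 : S → ℝ)
    (I : Set (S × A)) (Rt : ℝ)
    (hP : IsKernel P) (hγ0 : 0 ≤ γ) (hγ1 : γ < 1)
    (hr : ∀ s a, 0 ≤ r s a ∧ r s a ≤ 1)
    (hne : sbad ≠ sabs)
    (hPbad : ∀ a, P sbad a = pureDist sabs)
    (hPabs : ∀ a, P sabs a = pureDist sabs)
    (hrbad : ∀ a : A, r sbad a = 0) (hrabs : ∀ a : A, r sabs a = 0)
    (hd0 : IsDist d0)
    (hI : ∀ p ∈ I, p.1 ≠ sbad ∧ p.1 ≠ sabs)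
    (hpartial : ∀ p ∈ I, ∃ a' : A, (p.1, a') ∉ I)
    (hRt : Rt ≤ 0) :
    (∀ π, IsPolicy π →
        (1 / (1 - γ)) * (∑ s, ∑ a,
            dsa (Ptil P I) (extPol π) γ (extDist d0) (some s) a *
              (if s ≠ sbad ∧ s ≠ sabs ∧ (s, a) ∉ I then r s a else 0))
          ≤ ⨆ p : {π' : S → A → ℝ // IsPolicy π'},
              value (Ptil P I) (extPol p.1) (rtil r I Rt) γ (extDist d0))
    ∧ (∃ πo, IsPolicy πo ∧
        (∀ π', IsPolicy π' →
          value (Ptil P I) (extPol π') (rtil r I Rt) γ (extDist d0)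
            ≤ value (Ptil P I) (extPol πo) (rtil r I Rt) γ (extDist d0)) ∧
        (∑ s, ∑ a,
          if (s, a) ∈ I then dsa (Ptil P I) (extPol πo) γ (extDist d0) (some s) a
          else 0) = 0)
    ∧ (Rt < 0 → ∀ πo, IsPolicy πo →
        (∀ π', IsPolicy π' →
          value (Ptil P I) (extPol π') (rtil r I Rt) γ (extDist d0)
            ≤ value (Ptil P I) (extPol πo) (rtil r I Rt) γ (extDist d0)) →
        (∑ s, ∑ a,
          if (s, a) ∈ I then dsa (Ptil P I) (extPol πo) γ (extDist d0) (some s) a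
          else 0) = 0) :=
  stmt_15_general P r γ sbad sabs d0 I Rt hP hγ0 hγ1 hr hrbad hrabs hd0 hpartial hRt

end SafeRL
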